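/- Let K be an n×n real symmetric positive definite matrix, f ∈ ℝⁿ, c = K⁻¹f, and i ∈ {1,…,n}. Let K_{-i} be the (n−1)×(n−1) matrix obtained from K by deleting row and column i, f_{-i} the vector f with entry i removed, and let S_{-i}(x_i) = Σ_{j≠i} (K_{-i}⁻¹ f_{-i})_j K_{ij} denote the prediction at node i of the interpolant built on the remaining nodes. Then the leave-one-out error satisfies f_i − S_{-i}(x_i) = c_i / (K⁻¹)_{ii}. -/

import Mathlib

open Matrix

private lemma sum_extend_mul {m n : Type*} [Fintype m] [Fintype n] [DecidableEq n]
    (e : m → n) (he : Function.Injective e) (x : m → ℝ) (h : n → ℝ) :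
    ∑ j, Function.extend e x 0 j * h j = ∑ a, x a * h (e a) := by
  classical
  have hsub : Finset.univ.image e ⊆ Finset.univ := Finset.subset_univ _
  have hzero : ∀ j ∈ Finset.univ, j ∉ Finset.univ.image e →
      Function.extend e x 0 j * h j = 0 := by
    intro j _ hj
    have hne : ¬ ∃ a, e a = j := fun ⟨a, ha⟩ =>
      hj (Finset.mem_image.2 ⟨a, Finset.mem_univ a, ha⟩)
    rw [Function.extend_apply' _ _ _ hne]
    simp
  rw [← Finset.sum_subset hsub hzero,
    Finset.sum_image (fun a _ b _ hab => he hab)]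
  apply Finset.sum_congr rfl
  intro a _
  rw [he.extend_apply]

private lemma posDef_submatrix_inj {m n : Type*} [Fintype m] [Fintype n] [DecidableEq n]
    {K : Matrix n n ℝ} (hK : K.PosDef) (e : m → n) (he : Function.Injective e) :
    (K.submatrix e e).PosDef := by
  refine Matrix.PosDef.of_dotProduct_mulVec_pos ?_ ?_
  · have h1 := hK.1
    unfold Matrix.IsHermitian at *
    rw [Matrix.conjTranspose_submatrix, h1]
  · intro x hx
    set y : n → ℝ := Function.extend e x 0 with hy
    have hy0 : y ≠ 0 := by
      obtain ⟨a, ha⟩ := Function.ne_iff.1 hx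
      intro h0
      apply ha
      have := congrFun h0 (e a)
      rwa [hy, he.extend_apply] at this
    have key : dotProduct (star x) ((K.submatrix e e) *ᵥ x)
        = dotProduct (star y) (K *ᵥ y) := by
      simp only [star_trivial, dotProduct, Matrix.mulVec, Matrix.submatrix_apply]
      rw [sum_extend_mul e he x (fun j => ∑ k, K j k * y k)]
      apply Finset.sum_congr rfl
      intro a _
      congr 1
      calc ∑ b, K (e a) (e b) * x b = ∑ b, x b * K (e a) (e b) := by
            exact Finset.sum_congr rfl fun b _ => mul_comm _ _
        _ = ∑ k, y k * K (e a) k := (sum_extend_mul e he x _).symm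
        _ = ∑ k, K (e a) k * y k := Finset.sum_congr rfl fun k _ => mul_comm _ _
    rw [key]
    exact hK.dotProduct_mulVec_pos hy0

theorem rippa_loocv_identity {n : ℕ}
    (K : Matrix (Fin n) (Fin n) ℝ) (hK : K.PosDef)
    (f : Fin n → ℝ) (c : Fin n → ℝ) (hc : c = K⁻¹.mulVec f)
    (i : Fin n) :
    f i - ∑ j : {j : Fin n // j ≠ i},
        ((K.submatrix (Subtype.val : {j : Fin n // j ≠ i} → Fin n) Subtype.val)⁻¹.mulVec
          (fun j : {j : Fin n // j ≠ i} => f j.val)) j * K i j.val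
      = c i / K⁻¹ i i := by
  set B := K.submatrix (Subtype.val : {j : Fin n // j ≠ i} → Fin n) Subtype.val with hBdef
  have hB : B.PosDef := posDef_submatrix_inj hK _ Subtype.val_injective
  set g : {j : Fin n // j ≠ i} → ℝ := B⁻¹.mulVec (fun j => f j.val) with hgdef
  have hBg : B *ᵥ g = fun j => f j.val := by
    rw [hgdef, Matrix.mulVec_mulVec, Matrix.mul_nonsing_inv _
      (isUnit_iff_ne_zero.2 hB.det_pos.ne'), Matrix.one_mulVec]
  set u : Fin n → ℝ := fun j => if h : j = i then 0 else g ⟨j, h⟩ with hudef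
  set r : ℝ := f i - ∑ j : {j : Fin n // j ≠ i}, g j * K i j.val with hrdef
  set s : Fin n → ℝ := Pi.single i 1 with hsdef
  have hu0 : u i = 0 := by simp [hudef]
  have hsum : ∀ j : Fin n, ∑ k, K j k * u k = ∑ b : {k : Fin n // k ≠ i}, K j b.val * g b := by
    intro j
    rw [← Finset.sum_erase_add Finset.univ _ (Finset.mem_univ i), hu0, mul_zero, add_zero,
      Finset.sum_subtype (p := fun k => k ≠ i) (Finset.univ.erase i)
        (fun x => by simp) (fun k => K j k * u k)]
    apply Finset.sum_congr rfl
    intro b _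
    congr 1
    simp [hudef, b.2]
  have hKu : K *ᵥ u = f - r • s := by
    funext j
    by_cases hj : j = i
    · rw [hj]
      show ∑ k, K i k * u k = _
      rw [hsum]
      have h1 : ∑ b : {k : Fin n // k ≠ i}, K i b.val * g b
          = ∑ b : {k : Fin n // k ≠ i}, g b * K i b.val :=
        Finset.sum_congr rfl fun b _ => mul_comm _ _
      rw [h1]
      simp [hrdef, hsdef, Pi.single_eq_same]
    · show ∑ k, K j k * u k = _
      rw [hsum j]
      have := congrFun hBg ⟨j, hj⟩
      simp only [Matrix.mulVec, dotProduct, hBdef, Matrix.submatrix_apply] at this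
      rw [this]
      simp [hsdef, Pi.single_eq_of_ne hj]
  have hKdet : IsUnit K.det := isUnit_iff_ne_zero.2 hK.det_pos.ne'
  have hf : f = K *ᵥ u + r • s := by
    rw [hKu]
    abel
  have hsingle : (K⁻¹ *ᵥ s) i = K⁻¹ i i := by
    simp [hsdef, Matrix.mulVec, dotProduct, Pi.single_apply, mul_ite, mul_one, mul_zero]
  have hci : c i = r * K⁻¹ i i := by
    have hcu : c = u + r • (K⁻¹ *ᵥ s) := by
      rw [hc, hf, Matrix.mulVec_add, Matrix.mulVec_mulVec,
        Matrix.nonsing_inv_mul _ hKdet, Matrix.one_mulVec, Matrix.mulVec_smul]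
    have h2 := congrFun hcu i
    simp only [Pi.add_apply, Pi.smul_apply, smul_eq_mul] at h2
    rw [hu0, hsingle] at h2
    simpa using h2
  have hdiag : 0 < K⁻¹ i i := by
    have hinv := hK.inv
    have h1 : (Pi.single i 1 : Fin n → ℝ) ≠ 0 := by
      intro h; have := congrFun h i; simp at this
    have := hinv.dotProduct_mulVec_pos h1
    simpa [Matrix.mulVec, dotProduct, Pi.single_apply, ite_mul, mul_ite,
      one_mul, mul_one, zero_mul, mul_zero] using this
  rw [hci, mul_div_assoc, div_self hdiag.ne', mul_one]
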